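/- Let X be a simply connected topological space with a finite good open cover U = (U_μ)_{μ∈I}, i.e. every nonempty intersection of finitely many members of the cover is contractible. Then there exists a constant C₂ > 0, depending only on the cover U, such that for every ε > 0, every unital C*-algebra A, and every (ε,U)-flat unitary Čech 1-cocycle v = (v_{μν}) subordinate to U, there exist unitaries (u_μ)_{μ∈I} in A with ‖ u_μ·u_ν* − v_{μν}(x) ‖ < C₂·ε for all μ, ν ∈ I and all x ∈ U_μ ∩ U_ν. -/

import Mathlib

/-!
Sampling the flat cocycle at one point of each overlap gives constant unitaries `w μ ν` that
satisfy the cocycle identity up to `3ε` on triple overlaps. Fix a base point `x₀ ∈ U μ₀` and,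
for every `μ`, a path from `x₀` into `U μ` with a chain of members of the cover along it (a
Lebesgue number); let `t μ` be the product of `w` along that chain. If `U μ ∩ U ν` is nonempty,
prolong the paths of `μ` and `ν` inside `U μ` and `U ν` to a common point of the overlap. By
simple connectivity the prolonged paths are homotopic, and a fine grid on the homotopy passes
from one chain to the other in finitely many steps, each changing the product by `O(ε)`. So
`t μ * w μ ν = t ν + O(ε)` with a constant that depends only on the chosen paths and
homotopies, and `u μ = star (t μ)` works.
-/

/-- A unitary Čech 1-cocycle subordinate to the open cover `U`, with values in a unital
C*-algebra `A`. -/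
def IsUnitaryCechCocycle {X I A : Type*} [TopologicalSpace X] [NormedRing A] [StarRing A]
    (U : I → Set X) (v : I → I → X → A) : Prop :=
  (∀ μ ν, Continuous (v μ ν)) ∧
  (∀ μ ν, ∀ x ∈ U μ ∩ U ν, v μ ν x ∈ unitary A) ∧
  (∀ μ ν, ∀ x ∈ U μ ∩ U ν, star (v μ ν x) = v ν μ x) ∧
  (∀ μ, ∀ x ∈ U μ, v μ μ x = 1) ∧
  (∀ μ ν σ, ∀ x ∈ U μ ∩ U ν ∩ U σ, v μ ν x * v ν σ x = v μ σ x)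

/-- `(ε, U)`-flatness of a Čech 1-cocycle: oscillation less than `ε` on every overlap. -/
def IsFlatCocycle {X I A : Type*} [TopologicalSpace X] [NormedRing A]
    (ε : ℝ) (U : I → Set X) (v : I → I → X → A) : Prop :=
  ∀ μ ν, ∀ x ∈ U μ ∩ U ν, ∀ y ∈ U μ ∩ U ν, ‖v μ ν x - v μ ν y‖ < ε

/-- A finite good open cover: an open cover all of whose nonempty finite intersections of
members are contractible. -/
def IsGoodCover {X I : Type*} [TopologicalSpace X] (U : I → Set X) : Prop :=
  (∀ μ, IsOpen (U μ)) ∧ (∀ x, ∃ μ, x ∈ U μ) ∧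
  ∀ S : Finset I, S.Nonempty → (⋂ μ ∈ S, U μ).Nonempty →
    ContractibleSpace ↥(⋂ μ ∈ S, U μ)

namespace FlatCocycle

universe u

variable {I X A : Type*}

section Words

variable [Monoid A] (w : I → I → A)

def chainProd (c : ℕ → I) : ℕ → A
  | 0 => 1
  | n + 1 => chainProd c n * w (c n) (c (n + 1))

def transport (a b : I) (c : ℕ → I) (n : ℕ) : A :=
  w a (c 0) * chainProd w c n * w (c n) b

variable {w}

theorem chainProd_congr {c c' : ℕ → I} :
    ∀ {n}, (∀ m ≤ n, c m = c' m) → chainProd w c n = chainProd w c' n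
  | 0, _ => rfl
  | n + 1, h => by
    rw [chainProd, chainProd, chainProd_congr fun m hm => h m (hm.trans n.le_succ),
      h n n.le_succ, h (n + 1) le_rfl]

theorem chainProd_mem_unitary [StarMul A] (hw : ∀ a b, w a b ∈ unitary A) (c : ℕ → I) :
    ∀ n, chainProd w c n ∈ unitary A
  | 0 => one_mem _
  | n + 1 => mul_mem (chainProd_mem_unitary hw c n) (hw _ _)

theorem transport_mem_unitary [StarMul A] (hw : ∀ a b, w a b ∈ unitary A) (a b : I)
    (c : ℕ → I) (n : ℕ) : transport w a b c n ∈ unitary A :=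
  mul_mem (mul_mem (hw _ _) (chainProd_mem_unitary hw c n)) (hw _ _)

theorem chainProd_comp_div (hone : ∀ a, w a a = 1) (c : ℕ → I) {k : ℕ} (hk : 0 < k) :
    ∀ m, chainProd w (fun i => c (i / k)) m = chainProd w c (m / k)
  | 0 => by simp [chainProd]
  | m + 1 => by
    rw [chainProd, chainProd_comp_div hone c hk m]
    by_cases hdvd : k ∣ m + 1
    · rw [Nat.succ_div_of_dvd hdvd, chainProd]
    · rw [Nat.succ_div_of_not_dvd hdvd, hone, mul_one]

theorem mul_succ_sub_one_div {k n : ℕ} (hk : 0 < k) : (k * (n + 1) - 1) / k = n := by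
  have h : k * (n + 1) = n * k + k := by ring
  exact Nat.div_eq_of_lt_le (by omega) (by rw [Nat.succ_mul]; omega)

theorem transport_comp_div (hone : ∀ a, w a a = 1) (a b : I) (c : ℕ → I) {k : ℕ}
    (hk : 0 < k) (n : ℕ) :
    transport w a b (fun i => c (i / k)) (k * (n + 1) - 1) = transport w a b c n := by
  simp only [transport, chainProd_comp_div hone c hk, mul_succ_sub_one_div hk, Nat.zero_div]

theorem transport_extend_const {μ : I} (hμ : w μ μ = 1) (a b : I) (c : ℕ → I) {N : ℕ}
    (hN : 0 < N) :
    transport w a b (fun i => if i < N then c i else μ) (2 * N - 1)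
      = transport w a μ c (N - 1) * w μ b := by
  set e : ℕ → I := fun i => if i < N then c i else μ
  have hhead : chainProd w e (N - 1) = chainProd w c (N - 1) :=
    chainProd_congr fun m hm => if_pos (by omega)
  have htail : ∀ j, chainProd w e (N + j) = chainProd w c (N - 1) * w (c (N - 1)) μ := by
    intro j
    induction j with
    | zero =>
      obtain ⟨n, rfl⟩ := Nat.exists_eq_add_of_lt hN
      simp only [Nat.add_zero, zero_add, Nat.add_sub_cancel] at hhead ⊢
      rw [chainProd, hhead]
      simp [e]
    | succ j ih =>
      rw [← Nat.add_assoc, chainProd, ih]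
      simp only [e, if_neg (show ¬ N + j < N by omega), if_neg (show ¬ N + j + 1 < N by omega),
        hμ, mul_one]
  have h2N : 2 * N - 1 = N + (N - 1) := by omega
  simp only [transport, h2N, htail, if_pos hN, show ¬ N + (N - 1) < N by omega, if_false, e]
  simp [mul_assoc]

end Words

section NearCocycle

variable [NormedRing A] [StarRing A]

structure IsNearCocycle (U : I → Set X) (δ : ℝ) (w : I → I → A) : Prop where
  mem_unitary : ∀ a b, w a b ∈ unitary A
  self_eq_one : ∀ a, w a a = 1
  norm_mul_sub_le : ∀ a b c, (U a ∩ U b ∩ U c).Nonempty → ‖w a b * w b c - w a c‖ ≤ δ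

variable {U : I → Set X} {δ : ℝ} {w : I → I → A}

theorem IsNearCocycle.nonneg (hw : IsNearCocycle U δ w) {a : I} (ha : (U a).Nonempty) :
    0 ≤ δ :=
  (norm_nonneg _).trans (hw.norm_mul_sub_le a a a (by simpa only [Set.inter_self] using ha))

theorem norm_star_mul_sub_eq [CStarRing A] {t : A} (ht : t ∈ unitary A) (s r : A) :
    ‖star t * s - r‖ = ‖t * r - s‖ := by
  rw [← CStarRing.norm_mem_unitary_mul _ ht, mul_sub, ← mul_assoc,
    Unitary.mul_star_self_of_mem ht, one_mul, norm_sub_rev]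

/-- Replacing the letters of `c` by those of `c'` one at a time costs `2 δ` per letter. -/
theorem IsNearCocycle.norm_transport_sub_le [CStarRing A] (hw : IsNearCocycle U δ w) {a b : I}
    {c c' : ℕ → I} {n : ℕ} (h₀ : (U a ∩ U (c 0) ∩ U (c' 0)).Nonempty)
    (hstep : ∀ m < n, (U (c m) ∩ U (c' m) ∩ (U (c (m + 1)) ∩ U (c' (m + 1)))).Nonempty)
    (h₁ : (U (c n) ∩ U (c' n) ∩ U b).Nonempty) :
    ‖transport w a b c n - transport w a b c' n‖ ≤ (2 * n + 2) * δ := by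
  have hprefix : ∀ m, w a (c 0) * chainProd w c m ∈ unitary A := fun m =>
    mul_mem (hw.mem_unitary _ _) (chainProd_mem_unitary hw.mem_unitary c m)
  have key : ∀ m ≤ n, ‖transport w a (c' m) c m - w a (c' 0) * chainProd w c' m‖
      ≤ (2 * m + 1) * δ := by
    intro m
    induction m with
    | zero =>
      intro _
      simpa [transport, chainProd] using hw.norm_mul_sub_le _ _ _ h₀
    | succ m ih =>
      intro hm
      set E := w a (c 0) * chainProd w c m
      obtain ⟨x, hx⟩ := hstep m (by omega)
      have h₁ := hw.norm_mul_sub_le _ _ _ ⟨x, ⟨hx.1.1, hx.2.1⟩, hx.2.2⟩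
      have h₂ := hw.norm_mul_sub_le _ _ _ ⟨x, ⟨hx.1.1, hx.1.2⟩, hx.2.2⟩
      rw [← CStarRing.norm_mem_unitary_mul _ (hprefix m)] at h₁ h₂
      have h₃ := ih (by omega)
      rw [← CStarRing.norm_mul_mem_unitary _ (hw.mem_unitary (c' m) (c' (m + 1)))] at h₃
      have hsplit : transport w a (c' (m + 1)) c (m + 1) - w a (c' 0) * chainProd w c' (m + 1)
          = E * (w (c m) (c (m + 1)) * w (c (m + 1)) (c' (m + 1)) - w (c m) (c' (m + 1)))
            - E * (w (c m) (c' m) * w (c' m) (c' (m + 1)) - w (c m) (c' (m + 1)))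
            + (transport w a (c' m) c m - w a (c' 0) * chainProd w c' m)
              * w (c' m) (c' (m + 1)) := by
        simp only [transport, chainProd, E]; noncomm_ring
      rw [hsplit]
      exact (norm_add_le_of_le (norm_sub_le_of_le h₁ h₂) h₃).trans_eq (by push_cast; ring)
  have hcap := hw.norm_mul_sub_le _ _ _ h₁
  rw [norm_sub_rev, ← CStarRing.norm_mem_unitary_mul _ (hprefix n)] at hcap
  have hbody := key n le_rfl
  rw [← CStarRing.norm_mul_mem_unitary _ (hw.mem_unitary (c' n) b)] at hbody
  have hsplit : transport w a b c n - transport w a b c' n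
      = (w a (c 0) * chainProd w c n) * (w (c n) b - w (c n) (c' n) * w (c' n) b)
        + (transport w a (c' n) c n - w a (c' 0) * chainProd w c' n) * w (c' n) b := by
    simp only [transport]; noncomm_ring
  rw [hsplit]
  exact (norm_add_le_of_le hcap hbody).trans_eq (by ring)

end NearCocycle

section FineWords

noncomputable def gridPt (m N : ℕ) : unitInterval := Set.projIcc 0 1 zero_le_one ((m : ℝ) / N)

theorem mul_gridPt {m N : ℕ} (h : m ≤ N) : (N : ℝ) * gridPt m N = m := by
  rcases Nat.eq_zero_or_pos N with rfl | hN
  · simp [Nat.le_zero.mp h]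
  have hmem : (m : ℝ) / N ∈ Set.Icc (0 : ℝ) 1 :=
    ⟨by positivity, div_le_one_of_le₀ (by exact_mod_cast h) (Nat.cast_nonneg _)⟩
  rw [gridPt, Set.projIcc_of_mem _ hmem, mul_div_cancel₀ _ (by positivity)]

theorem gridPt_zero (N : ℕ) : gridPt 0 N = 0 := by
  simp [gridPt]

theorem gridPt_self {N : ℕ} (hN : 0 < N) : gridPt N N = 1 := by
  simp [gridPt, div_self (show (N : ℝ) ≠ 0 by positivity)]

def IsFineWord (U : I → Set X) (f : unitInterval → X) (N : ℕ) (c : ℕ → I) : Prop :=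
  ∀ i < N, ∀ s : unitInterval, (i : ℝ) ≤ N * (s : ℝ) → N * (s : ℝ) ≤ i + 1 →
    f s ∈ U (c i)

variable {U : I → Set X} {f : unitInterval → X} {N : ℕ} {c : ℕ → I}

theorem IsFineWord.apply_gridPt_mem (h : IsFineWord U f N c) {m : ℕ} (hm : m < N) :
    f (gridPt m N) ∈ U (c m) :=
  h m hm _ (mul_gridPt hm.le).ge (by rw [mul_gridPt hm.le]; linarith)

theorem IsFineWord.apply_gridPt_succ_mem (h : IsFineWord U f N c) {m : ℕ} (hm : m < N) :
    f (gridPt (m + 1) N) ∈ U (c m) :=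
  h m hm _ (by rw [mul_gridPt hm]; push_cast; linarith) (by rw [mul_gridPt hm]; push_cast; rfl)

theorem IsFineWord.comp_div (h : IsFineWord U f N c) {k : ℕ} (hk : 0 < k) :
    IsFineWord U f (k * N) (fun i => c (i / k)) := by
  intro i hi s h₁ h₂
  have hk' : (0 : ℝ) < k := by exact_mod_cast hk
  have hq₁ : ((i / k : ℕ) : ℝ) * k ≤ i := by exact_mod_cast Nat.div_mul_le_self i k
  have hq₂ : (i : ℝ) + 1 ≤ ((i / k : ℕ) + 1 : ℝ) * k := by
    exact_mod_cast (Nat.div_lt_iff_lt_mul hk).mp (Nat.lt_succ_self (i / k))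
  push_cast at h₁ h₂
  refine h (i / k) (by rwa [Nat.div_lt_iff_lt_mul hk, mul_comm]) s ?_ ?_
  · exact le_of_mul_le_mul_right (by linarith) hk'
  · exact le_of_mul_le_mul_right (by linarith) hk'

variable [NormedRing A] [StarRing A] [CStarRing A] {δ : ℝ} {w : I → I → A}

/-- Refined to the common mesh `N * M`, the two words interleave. -/
theorem IsNearCocycle.norm_transport_sub_le_of_isFineWord (hw : IsNearCocycle U δ w)
    {M : ℕ} {c' : ℕ → I} (hN : 0 < N) (hM : 0 < M) (hc : IsFineWord U f N c)
    (hc' : IsFineWord U f M c') {a b : I} (ha : f 0 ∈ U a) (hb : f 1 ∈ U b) :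
    ‖transport w a b c (N - 1) - transport w a b c' (M - 1)‖ ≤ 2 * N * M * δ := by
  have hL : 0 < N * M := Nat.mul_pos hN hM
  have hd : IsFineWord U f (N * M) (fun i => c (i / M)) := by
    simpa only [mul_comm] using hc.comp_div hM
  have hd' : IsFineWord U f (N * M) (fun i => c' (i / N)) := hc'.comp_div hN
  have e : transport w a b c (N - 1) = transport w a b (fun i => c (i / M)) (N * M - 1) := by
    rw [← transport_comp_div hw.self_eq_one a b c hM (N - 1), Nat.sub_add_cancel hN, mul_comm]
  have e' : transport w a b c' (M - 1) = transport w a b (fun i => c' (i / N)) (N * M - 1) := by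
    rw [← transport_comp_div hw.self_eq_one a b c' hN (M - 1), Nat.sub_add_cancel hM]
  have hlast : N * M - 1 + 1 = N * M := Nat.sub_add_cancel hL
  rw [e, e']
  refine (hw.norm_transport_sub_le ?_ (fun m hm => ?_) ?_).trans_eq ?_
  · refine ⟨f (gridPt 0 (N * M)), ⟨?_, hd.apply_gridPt_mem hL⟩, hd'.apply_gridPt_mem hL⟩
    rwa [gridPt_zero]
  · exact ⟨f (gridPt (m + 1) (N * M)),
      ⟨hd.apply_gridPt_succ_mem (by omega), hd'.apply_gridPt_succ_mem (by omega)⟩,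
      hd.apply_gridPt_mem (by omega), hd'.apply_gridPt_mem (by omega)⟩
  · refine ⟨f (gridPt (N * M - 1 + 1) (N * M)),
      ⟨hd.apply_gridPt_succ_mem (by omega), hd'.apply_gridPt_succ_mem (by omega)⟩, ?_⟩
    rwa [hlast, gridPt_self hL]
  · rw [Nat.cast_sub hL]; push_cast; ring

end FineWords

section Homotopy

variable [TopologicalSpace X] {U : I → Set X}

theorem dist_gridPt_le {j L : ℕ} {t : unitInterval} (hj : j < L) (h₁ : (j : ℝ) ≤ L * t)
    (h₂ : L * (t : ℝ) ≤ j + 1) : dist t (gridPt j L) ≤ 1 / L := by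
  have hL : (0 : ℝ) < L := by exact_mod_cast hj.pos
  rw [Subtype.dist_eq, Real.dist_eq, le_div_iff₀ hL, ← abs_of_pos hL, ← abs_mul, abs_le]
  constructor <;> nlinarith [mul_gridPt hj.le]

theorem exists_isFineWord_slices (hopen : ∀ μ, IsOpen (U μ)) (hcov : ∀ x, ∃ μ, x ∈ U μ)
    (H : C(unitInterval × unitInterval, X)) :
    ∃ L : ℕ, 0 < L ∧ ∃ g : ℕ → ℕ → I, ∀ j < L, ∀ t : unitInterval,
      (j : ℝ) ≤ L * (t : ℝ) → L * (t : ℝ) ≤ j + 1 →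
        IsFineWord U (fun s => H (t, s)) L (g j) := by
  obtain ⟨δ, hδ, hball⟩ := lebesgue_number_lemma_of_metric isCompact_univ
    (fun μ => (hopen μ).preimage H.continuous) (fun z _ => Set.mem_iUnion.mpr (hcov (H z)))
  choose F hF using fun z => hball z (Set.mem_univ z)
  obtain ⟨n, hn⟩ := exists_nat_one_div_lt hδ
  have hmesh : (1 : ℝ) / ((n + 1 : ℕ) : ℝ) < δ := by exact_mod_cast hn
  refine ⟨n + 1, n.succ_pos, fun j i => F (gridPt j (n + 1), gridPt i (n + 1)),
    fun j hj t ht₁ ht₂ i hi s hs₁ hs₂ => hF _ ?_⟩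
  rw [Metric.mem_ball, Prod.dist_eq]
  exact max_lt ((dist_gridPt_le hj ht₁ ht₂).trans_lt hmesh)
    ((dist_gridPt_le hi hs₁ hs₂).trans_lt hmesh)

theorem exists_isFineWord (hopen : ∀ μ, IsOpen (U μ)) (hcov : ∀ x, ∃ μ, x ∈ U μ)
    {x y : X} (γ : Path x y) : ∃ N : ℕ, 0 < N ∧ ∃ c : ℕ → I, IsFineWord U γ N c := by
  obtain ⟨L, hL, g, hg⟩ := exists_isFineWord_slices hopen hcov
    ⟨fun z : unitInterval × unitInterval => γ z.2, by fun_prop⟩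
  exact ⟨L, hL, g 0, hg 0 hL 0 (by simp) (by simp)⟩

/-- The columns of a fine grid for the homotopy connect the two words by a chain of words of
a common mesh. -/
theorem exists_norm_transport_sub_le_of_homotopic (hopen : ∀ μ, IsOpen (U μ))
    (hcov : ∀ x, ∃ μ, x ∈ U μ) {x y : X} {γ γ' : Path x y} (hγ : γ.Homotopic γ')
    {N M : ℕ} {c c' : ℕ → I} (hN : 0 < N) (hM : 0 < M) (hc : IsFineWord U γ N c)
    (hc' : IsFineWord U γ' M c') {a b : I} (ha : x ∈ U a) (hb : y ∈ U b) :
    ∃ K : ℕ, ∀ (A : Type u) [NormedRing A] [StarRing A] [CStarRing A] (δ : ℝ)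
      (w : I → I → A), IsNearCocycle U δ w →
        ‖transport w a b c (N - 1) - transport w a b c' (M - 1)‖ ≤ K * δ := by
  obtain ⟨H⟩ := hγ
  obtain ⟨L, hL, g, hg⟩ := exists_isFineWord_slices hopen hcov H.toContinuousMap
  refine ⟨2 * N * L + (L - 1) * (2 * L * L) + 2 * L * M, fun A _ _ _ δ w hw => ?_⟩
  have hδ : 0 ≤ δ := hw.nonneg ⟨x, ha⟩
  set r : ℕ → A := fun j => transport w a b (g j) (L - 1)
  have hfirst : ‖transport w a b c (N - 1) - r 0‖ ≤ 2 * N * L * δ := by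
    have h₀ : IsFineWord U γ L (g 0) := by
      simpa using hg 0 hL 0 (by simp) (by simp)
    exact hw.norm_transport_sub_le_of_isFineWord hN hL hc h₀ (by simpa) (by simpa)
  have hlast : ‖r (L - 1) - transport w a b c' (M - 1)‖ ≤ 2 * L * M * δ := by
    have h₁ : IsFineWord U γ' L (g (L - 1)) := by
      simpa using hg (L - 1) (by omega) 1 (by simp)
        (by rw [Set.Icc.coe_one, mul_one]; exact_mod_cast (by omega : L ≤ L - 1 + 1))
    exact hw.norm_transport_sub_le_of_isFineWord hL hM h₁ hc' (by simpa) (by simpa)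
  have hstep : ∀ j ∈ Finset.range (L - 1), ‖r j - r (j + 1)‖ ≤ 2 * L * L * δ := by
    intro j hj
    rw [Finset.mem_range] at hj
    have ht : (L : ℝ) * gridPt (j + 1) L = j + 1 := by
      rw [mul_gridPt (by omega)]; push_cast; rfl
    exact hw.norm_transport_sub_le_of_isFineWord hL hL
      (hg j (by omega) _ (by linarith) (by linarith))
      (hg (j + 1) (by omega) _ (by push_cast; linarith) (by push_cast; linarith))
      (by simpa using ha) (by simpa using hb)
  have hchain : ‖r 0 - r (L - 1)‖ ≤ (L - 1 : ℕ) * (2 * L * L * δ) := by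
    have := dist_le_range_sum_dist r (L - 1)
    simp only [dist_eq_norm] at this
    refine this.trans ((Finset.sum_le_card_nsmul _ _ _ hstep).trans_eq ?_)
    simp
  calc ‖transport w a b c (N - 1) - transport w a b c' (M - 1)‖
      ≤ ‖transport w a b c (N - 1) - r 0‖ + ‖r 0 - r (L - 1)‖
          + ‖r (L - 1) - transport w a b c' (M - 1)‖ := by
        simpa only [dist_eq_norm] using dist_triangle4 _ (r 0) (r (L - 1)) _
    _ ≤ 2 * N * L * δ + (L - 1 : ℕ) * (2 * L * L * δ) + 2 * L * M * δ := by gcongr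
    _ = _ := by push_cast; ring


theorem IsFineWord.trans_of_forall_mem {N : ℕ} {c : ℕ → I} {x y z : X} {γ : Path x y}
    {α : Path y z} {μ : I} (hc : IsFineWord U γ N c) (hα : ∀ s, α s ∈ U μ) :
    IsFineWord U (γ.trans α) (2 * N) (fun i => if i < N then c i else μ) := by
  intro i hi s h₁ h₂
  have hN : (0 : ℝ) < N := by exact_mod_cast (by omega : 0 < N)
  push_cast at h₁ h₂
  rw [Path.trans_apply]
  dsimp only
  split_ifs with hiN hs
  · exact hc i hiN _ (by simp only; linarith) (by simp only; linarith)
  · have hiN' : (i : ℝ) + 1 ≤ N := by exact_mod_cast hiN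
    nlinarith
  · have hNi : (N : ℝ) ≤ i := by exact_mod_cast not_lt.mp hiN
    convert hα 0 using 1
    rw [α.source]
    convert γ.target using 2
    ext
    simp only [Set.Icc.coe_one]
    nlinarith
  · exact hα _

/-- Prolonged inside `U μ` and `U ν` to the common end point `q`, the two paths are
homotopic. -/
theorem exists_norm_transport_mul_sub_le_of_joinedIn [SimplyConnectedSpace X]
    (hopen : ∀ μ, IsOpen (U μ)) (hcov : ∀ x, ∃ μ, x ∈ U μ) {x y z q : X} {γ : Path x y}
    {γ' : Path x z} {N M : ℕ}
    {c c' : ℕ → I} (hN : 0 < N) (hM : 0 < M) (hc : IsFineWord U γ N c)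
    (hc' : IsFineWord U γ' M c') {a μ ν : I} (ha : x ∈ U a) (hμ : JoinedIn (U μ) y q)
    (hν : JoinedIn (U ν) z q) :
    ∃ K : ℕ, ∀ (A : Type u) [NormedRing A] [StarRing A] [CStarRing A] (δ : ℝ)
      (w : I → I → A), IsNearCocycle U δ w →
        ‖transport w a μ c (N - 1) * w μ ν - transport w a ν c' (M - 1)‖ ≤ K * δ := by
  obtain ⟨K, hK⟩ := exists_norm_transport_sub_le_of_homotopic hopen hcov
    (SimplyConnectedSpace.paths_homotopic _ _) (by omega) (by omega)
    (hc.trans_of_forall_mem hμ.somePath_mem) (hc'.trans_of_forall_mem hν.somePath_mem) ha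
    hν.target_mem
  refine ⟨K, fun A _ _ _ δ w hw => ?_⟩
  have hextend := hK A δ w hw
  rwa [transport_extend_const (hw.self_eq_one μ) _ _ _ hN,
    transport_extend_const (hw.self_eq_one ν) _ _ _ hM, hw.self_eq_one, mul_one] at hextend

end Homotopy


section Sample

variable [TopologicalSpace X] [NormedRing A] {U : I → Set X} {v : I → I → X → A}

open Classical in
noncomputable def sampledCocycle (U : I → Set X) (v : I → I → X → A) (a b : I) : A :=
  if h : (U a ∩ U b).Nonempty then v a b h.some else 1

theorem norm_sampledCocycle_sub_lt {ε : ℝ} (hflat : IsFlatCocycle ε U v) {a b : I} {x : X}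
    (hx : x ∈ U a ∩ U b) : ‖sampledCocycle U v a b - v a b x‖ < ε := by
  rw [sampledCocycle, dif_pos ⟨x, hx⟩]
  exact hflat a b _ (Set.Nonempty.some_mem _) x hx

theorem _root_.IsUnitaryCechCocycle.isNearCocycle_sampledCocycle [StarRing A] [CStarRing A]
    {ε : ℝ} (hv : IsUnitaryCechCocycle U v) (hflat : IsFlatCocycle ε U v) :
    IsNearCocycle U (3 * ε) (sampledCocycle U v) where
  mem_unitary a b := by
    unfold sampledCocycle
    split_ifs with h
    exacts [hv.2.1 a b _ h.some_mem, one_mem _]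
  self_eq_one a := by
    unfold sampledCocycle
    split_ifs with h
    exacts [hv.2.2.2.1 a _ h.some_mem.1, rfl]
  norm_mul_sub_le a b c := by
    rintro ⟨x, ⟨hxa, hxb⟩, hxc⟩
    set w := sampledCocycle U v
    have hwbc : w b c ∈ unitary A := by
      unfold w sampledCocycle
      rw [dif_pos ⟨x, hxb, hxc⟩]
      exact hv.2.1 b c _ (Set.Nonempty.some_mem _)
    have h₁ : ‖(w a b - v a b x) * w b c‖ < ε := by
      rw [CStarRing.norm_mul_mem_unitary _ hwbc]
      exact norm_sampledCocycle_sub_lt hflat ⟨hxa, hxb⟩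
    have h₂ : ‖v a b x * (w b c - v b c x)‖ < ε := by
      rw [CStarRing.norm_mem_unitary_mul _ (hv.2.1 a b x ⟨hxa, hxb⟩)]
      exact norm_sampledCocycle_sub_lt hflat ⟨hxb, hxc⟩
    have h₃ : ‖w a c - v a c x‖ < ε := norm_sampledCocycle_sub_lt hflat ⟨hxa, hxc⟩
    have hsplit : w a b * w b c - w a c = (w a b - v a b x) * w b c
        + v a b x * (w b c - v b c x) - (w a c - v a b x * v b c x) := by noncomm_ring
    rw [hsplit, hv.2.2.2.2 a b c x ⟨⟨hxa, hxb⟩, hxc⟩]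
    linarith [norm_sub_le_of_le (norm_add_le_of_le h₁.le h₂.le) h₃.le]

end Sample

theorem _root_.IsGoodCover.isPathConnected [TopologicalSpace X] {U : I → Set X}
    (hU : IsGoodCover U) {μ : I} (hμ : (U μ).Nonempty) : IsPathConnected (U μ) := by
  have hcontr := hU.2.2 {μ} (Finset.singleton_nonempty μ)
    (by rwa [Finset.set_biInter_singleton])
  rw [Finset.set_biInter_singleton] at hcontr
  exact isPathConnected_iff_pathConnectedSpace.mpr inferInstance

theorem _root_.IsGoodCover.exists_norm_transport_mul_sub_le [TopologicalSpace X]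
    [SimplyConnectedSpace X] [Finite I] {U : I → Set X} (hU : IsGoodCover U) :
    ∃ (a : I) (N : I → ℕ) (c : I → ℕ → I) (K : ℕ),
      ∀ (A : Type u) [NormedRing A] [StarRing A] [CStarRing A] (δ : ℝ) (w : I → I → A),
        IsNearCocycle U δ w → ∀ μ ν, (U μ ∩ U ν).Nonempty →
          ‖transport w a μ (c μ) (N μ - 1) * w μ ν - transport w a ν (c ν) (N ν - 1)‖
            ≤ K * δ := by
  classical
  have : Fintype I := Fintype.ofFinite I
  obtain ⟨x₀⟩ := (inferInstance : Nonempty X)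
  obtain ⟨a, hx₀⟩ := hU.2.1 x₀
  let p : I → X := fun μ => if h : (U μ).Nonempty then h.some else x₀
  have hp : ∀ μ, (U μ).Nonempty → p μ ∈ U μ := fun μ h => by
    simp only [p, dif_pos h]; exact h.some_mem
  choose N hN c hc using fun μ =>
    exists_isFineWord hU.1 hU.2.1 (PathConnectedSpace.somePath x₀ (p μ))
  have hedge : ∀ μ ν, ∃ K : ℕ, (U μ ∩ U ν).Nonempty →
      ∀ (A : Type u) [NormedRing A] [StarRing A] [CStarRing A] (δ : ℝ) (w : I → I → A),
        IsNearCocycle U δ w →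
          ‖transport w a μ (c μ) (N μ - 1) * w μ ν - transport w a ν (c ν) (N ν - 1)‖
            ≤ K * δ := by
    intro μ ν
    by_cases hμν : (U μ ∩ U ν).Nonempty
    · obtain ⟨q, hqμ, hqν⟩ := hμν
      have hjoin : ∀ κ, q ∈ U κ → JoinedIn (U κ) (p κ) q := fun κ hq =>
        (hU.isPathConnected ⟨q, hq⟩).joinedIn _ (hp κ ⟨q, hq⟩) _ hq
      obtain ⟨K, hK⟩ := exists_norm_transport_mul_sub_le_of_joinedIn hU.1 hU.2.1 (hN μ) (hN ν)
        (hc μ) (hc ν) hx₀ (hjoin μ hqμ) (hjoin ν hqν)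
      exact ⟨K, fun _ => hK⟩
    · exact ⟨0, fun h => absurd h hμν⟩
  choose K hK using hedge
  refine ⟨a, N, c, ∑ z : I × I, K z.1 z.2, fun A _ _ _ δ w hw μ ν hμν =>
    (hK μ ν hμν A δ w hw).trans (mul_le_mul_of_nonneg_right ?_ (hw.nonneg hμν.left))⟩
  exact_mod_cast Finset.single_le_sum (f := fun z : I × I => K z.1 z.2)
    (fun _ _ => Nat.zero_le _) (Finset.mem_univ (μ, ν))

end FlatCocycle

open FlatCocycle

theorem flat_cocycle_almost_trivial_of_simplyConnected.{u}
    {X I : Type*} [TopologicalSpace X] [SimplyConnectedSpace X] [Finite I]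
    (U : I → Set X) (hgood : IsGoodCover U) :
    ∃ C₂ > (0 : ℝ), ∀ ε > (0 : ℝ), ∀ (A : Type u) [CStarAlgebra A],
      ∀ v : I → I → X → A, IsUnitaryCechCocycle U v → IsFlatCocycle ε U v →
        ∃ u : I → A, (∀ μ, u μ ∈ unitary A) ∧
          ∀ μ ν, ∀ x ∈ U μ ∩ U ν, ‖u μ * star (u ν) - v μ ν x‖ < C₂ * ε := by
  obtain ⟨a, N, c, K, hK⟩ := hgood.exists_norm_transport_mul_sub_le
  refine ⟨3 * K + 1, by positivity, fun ε _ A _ v hv hflat => ?_⟩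
  set w := sampledCocycle U v
  have hw := hv.isNearCocycle_sampledCocycle hflat
  set t : I → A := fun μ => transport w a μ (c μ) (N μ - 1)
  have ht : ∀ μ, t μ ∈ unitary A := fun μ => transport_mem_unitary hw.mem_unitary _ _ _ _
  refine ⟨fun μ => star (t μ), fun μ => Unitary.star_mem (ht μ), fun μ ν x hx => ?_⟩
  calc ‖star (t μ) * star (star (t ν)) - v μ ν x‖
      ≤ ‖star (t μ) * t ν - w μ ν‖ + ‖w μ ν - v μ ν x‖ := by
        rw [star_star]; exact norm_sub_le_norm_sub_add_norm_sub _ _ _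
    _ < K * (3 * ε) + ε := by
        rw [norm_star_mul_sub_eq (ht μ)]
        exact add_lt_add_of_le_of_lt (hK A (3 * ε) w hw μ ν ⟨x, hx⟩)
          (norm_sampledCocycle_sub_lt hflat hx)
    _ = (3 * K + 1) * ε := by ring
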